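/- Let n ≥ 2 be an integer, f = sinh, and let y be a twice differentiable positive solution on (0,∞) of y'' + (n-1)(f'/f)y' - (n-1)y/f² = 0 with y → +∞ at 0⁺, y → 0 at +∞, and y' < 0. Then x = y'/y is increasing on (0,∞) and x(r) → -∞ as r → 0⁺. -/

import Mathlib

/-!
`x = y'/y` solves the Riccati equation `x' = -Q(r, x)` with
`Q(r, x) = x² + (n-1) coth r · x - (n-1)/sinh² r`, so monotonicity amounts to `Q(r, x r) ≤ 0`.
If `Q(r₀, x r₀) > 0`, then, since `coth` and `1/sinh²` decrease, `u = 1/x` satisfies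
`u' ≥ 1 + B u - C u²` with the coefficients frozen at `r₀`, and this stays above a positive
constant as long as `u(r₀) ≤ u < 0`; so `u` reaches `0` in finite time, contradicting `x < 0`.
Finally, if the increasing function `x` were bounded below by `M`, then `y e^{-Mr}` would
increase, so `y` would stay bounded near `0`.
-/

open Real Set Filter Topology

theorem hasDerivAt_deriv_div_of_ode {y : ℝ → ℝ} {r b c : ℝ} (hy : y r ≠ 0)
    (hy₁ : DifferentiableAt ℝ y r) (hy₂ : DifferentiableAt ℝ (deriv y) r)
    (hode : deriv (deriv y) r + b * deriv y r - c * y r = 0) :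
    HasDerivAt (fun s => deriv y s / y s)
      (-((deriv y r / y r) ^ 2 + b * (deriv y r / y r) - c)) r := by
  refine (hy₂.hasDerivAt.div hy₁.hasDerivAt hy).congr_deriv ?_
  rw [eq_sub_of_add_eq (eq_of_sub_eq_zero hode)]
  field_simp
  ring

theorem add_mul_sub_le_of_lt_deriv {u u' : ℝ → ℝ} {a δ : ℝ} (hδ : 0 ≤ δ)
    (hu : ∀ t ≥ a, HasDerivAt u (u' t) t) (hslope : ∀ t ≥ a, u a ≤ u t → δ < u' t)
    {t : ℝ} (ht : a ≤ t) : u a + δ * (t - a) ≤ u t := by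
  have hline : ∀ s, HasDerivAt (fun s => u a + δ * (s - a)) δ s := fun s => by
    simpa using ((hasDerivAt_id s).sub_const a).const_mul δ |>.const_add (u a)
  refine image_le_of_deriv_right_lt_deriv_boundary' (f' := fun _ => δ) (B' := u')
    (fun s _ => (hline s).continuousAt.continuousWithinAt) (fun s _ => (hline s).hasDerivWithinAt)
    (by simp) (fun s hs => (hu s hs.1).continuousAt.continuousWithinAt)
    (fun s hs => (hu s hs.1).hasDerivWithinAt) (fun s hs hus => hslope s hs.1 ?_) ⟨ht, le_rfl⟩
  have : 0 ≤ δ * (s - a) := mul_nonneg hδ (sub_nonneg.2 hs.1)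
  linarith

theorem sq_add_mul_sub_nonpos_of_riccati {x b c : ℝ → ℝ} {a : ℝ}
    (hx : ∀ t ≥ a, x t < 0) (hd : ∀ t ≥ a, HasDerivAt x (-(x t ^ 2 + b t * x t - c t)) t)
    (hb : AntitoneOn b (Ici a)) (hc : AntitoneOn c (Ici a)) (hb₀ : 0 ≤ b a) (hc₀ : 0 ≤ c a) :
    x a ^ 2 + b a * x a - c a ≤ 0 := by
  by_contra! hQ
  let p : ℝ → ℝ := fun v => 1 + b a * v - c a * v ^ 2
  have hu : ∀ t ≥ a, HasDerivAt x⁻¹ (1 + b t * x⁻¹ t - c t * x⁻¹ t ^ 2) t := fun t ht =>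
    ((hd t ht).inv (hx t ht).ne).congr_deriv <| by
      simp only [Pi.inv_apply]; field_simp [(hx t ht).ne]
  have hua : x⁻¹ a < 0 := inv_lt_zero.2 (hx a le_rfl)
  have hp : 0 < p (x⁻¹ a) := by
    have : p (x⁻¹ a) = (x a ^ 2 + b a * x a - c a) / x a ^ 2 := by
      simp only [p, Pi.inv_apply]; field_simp [(hx a le_rfl).ne]
    rw [this]
    exact div_pos hQ (sq_pos_of_neg (hx a le_rfl))
  have hslope : ∀ t ≥ a, x⁻¹ a ≤ x⁻¹ t →
      p (x⁻¹ a) / 2 < 1 + b t * x⁻¹ t - c t * x⁻¹ t ^ 2 := by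
    intro t ht hle
    have hut : x⁻¹ t < 0 := inv_lt_zero.2 (hx t ht)
    calc p (x⁻¹ a) / 2 < p (x⁻¹ a) := half_lt_self hp
      _ ≤ p (x⁻¹ t) := by
        -- `p v - p u = (v - u) (b a - c a (v + u))` is nonnegative for `u ≤ v < 0`
        have : 0 ≤ (x⁻¹ t - x⁻¹ a) * (b a - c a * (x⁻¹ t + x⁻¹ a)) :=
          mul_nonneg (by linarith) (by nlinarith)
        simp only [p]; nlinarith
      _ ≤ 1 + b t * x⁻¹ t - c t * x⁻¹ t ^ 2 := by
        have := hb self_mem_Ici ht ht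
        have := hc self_mem_Ici ht ht
        simp only [p]; nlinarith
  set t := a - 2 * x⁻¹ a / p (x⁻¹ a)
  have hat : a ≤ t := by
    have : 0 ≤ -(2 * x⁻¹ a / p (x⁻¹ a)) := by
      rw [neg_nonneg]; exact div_nonpos_of_nonpos_of_nonneg (by linarith) hp.le
    linarith
  have hreach := add_mul_sub_le_of_lt_deriv (half_pos hp).le hu hslope hat
  have : x⁻¹ a + p (x⁻¹ a) / 2 * (t - a) = 0 := by simp only [t]; field_simp; ring
  exact (inv_lt_zero.2 (hx t hat)).not_ge (this ▸ hreach)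

theorem antitoneOn_mul_cosh_div_sinh {k : ℝ} (hk : 0 ≤ k) :
    AntitoneOn (fun r => k * (cosh r / sinh r)) (Ioi 0) := by
  intro s hs t ht hst
  refine mul_le_mul_of_nonneg_left ?_ hk
  rw [div_le_div_iff₀ (sinh_pos_iff.2 ht) (sinh_pos_iff.2 hs)]
  have : 0 ≤ sinh (t - s) := sinh_nonneg_iff.2 (sub_nonneg.2 hst)
  rw [sinh_sub] at this
  linarith

theorem antitoneOn_div_sinh_sq {k : ℝ} (hk : 0 ≤ k) :
    AntitoneOn (fun r => k / sinh r ^ 2) (Ioi 0) := fun _ hs _ _ hst =>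
  div_le_div_of_nonneg_left hk (pow_pos (sinh_pos_iff.2 hs) 2)
    (pow_le_pow_left₀ (sinh_pos_iff.2 hs).le (sinh_le_sinh.2 hst) 2)

theorem MonotoneOn.tendsto_nhdsGT_atBot {α β : Type*} [LinearOrder α] [TopologicalSpace α]
    [OrderTopology α] [LinearOrder β] {f : α → β} {a : α} (hf : MonotoneOn f (Ioi a))
    (hbdd : ¬BddBelow (f '' Ioi a)) : Tendsto f (𝓝[>] a) atBot := by
  refine tendsto_atBot.2 fun M => ?_
  obtain ⟨_, ⟨r, hr, rfl⟩, hrM⟩ := not_bddBelow_iff.1 hbdd M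
  filter_upwards [Ioo_mem_nhdsGT hr] with s hs using (hf hs.1 hr hs.2.le).trans hrM.le

theorem monotoneOn_mul_exp_of_mul_le_deriv {y y' : ℝ → ℝ} {D : Set ℝ} {M : ℝ}
    (hD : Convex ℝ D) (hy : ∀ r ∈ D, HasDerivAt y (y' r) r) (hM : ∀ r ∈ D, M * y r ≤ y' r) :
    MonotoneOn (fun r => y r * exp (-M * r)) D := by
  have hg : ∀ r ∈ D, HasDerivAt (fun r => y r * exp (-M * r))
      ((y' r - M * y r) * exp (-M * r)) r := fun r hr =>
    ((hy r hr).mul ((hasDerivAt_id r).const_mul (-M)).exp).congr_deriv (by simp only [id_eq, neg_mul, mul_one, mul_neg]; ring)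
  exact monotoneOn_of_hasDerivWithinAt_nonneg hD
    (fun r hr => (hg r hr).continuousAt.continuousWithinAt)
    (fun r hr => (hg r (interior_subset hr)).hasDerivWithinAt)
    (fun r hr => mul_nonneg (sub_nonneg.2 (hM r (interior_subset hr))) (exp_pos _).le)

theorem not_tendsto_atTop_nhdsGT_of_mul_le_deriv {y y' : ℝ → ℝ} {a M : ℝ}
    (hy : ∀ r ∈ Ioi a, HasDerivAt y (y' r) r) (hM : ∀ r ∈ Ioi a, M * y r ≤ y' r) :
    ¬Tendsto y (𝓝[>] a) atTop := by
  intro hlim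
  have hmono := monotoneOn_mul_exp_of_mul_le_deriv (convex_Ioi a) hy hM
  have hexp : Tendsto (fun r => exp (-M * r)) (𝓝[>] a) (𝓝 (exp (-M * a))) :=
    ((continuous_const.mul continuous_id).rexp.tendsto a).mono_left nhdsWithin_le_nhds
  obtain ⟨r, hr_big, hr⟩ :=
    (((hlim.atTop_mul_pos (exp_pos _) hexp).eventually_gt_atTop
      (y (a + 1) * exp (-M * (a + 1)))).and (Ioc_mem_nhdsGT (lt_add_one a))).exists
  exact hr_big.not_ge (hmono hr.1 (lt_add_one a) hr.2)

theorem stmt5_general (n : ℕ) (hn : 2 ≤ n) (y : ℝ → ℝ)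
    (hpos : ∀ r ∈ Ioi (0 : ℝ), 0 < y r)
    (hy1 : ∀ r ∈ Ioi (0 : ℝ), DifferentiableAt ℝ y r)
    (hy2 : ∀ r ∈ Ioi (0 : ℝ), DifferentiableAt ℝ (deriv y) r)
    (hode : ∀ r ∈ Ioi (0 : ℝ),
      deriv (deriv y) r + (n - 1 : ℝ) * (Real.cosh r / Real.sinh r) * deriv y r
        - (n - 1 : ℝ) * y r / (Real.sinh r) ^ 2 = 0)
    (hlim0 : Tendsto y (nhdsWithin 0 (Ioi 0)) atTop)
    (hy' : ∀ r ∈ Ioi (0 : ℝ), deriv y r < 0)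
    (x : ℝ → ℝ) (hx : ∀ r, x r = deriv y r / y r) :
    MonotoneOn x (Ioi 0) ∧ Tendsto x (nhdsWithin 0 (Ioi 0)) atBot := by
  have hxy : x = fun r => deriv y r / y r := funext hx
  have hk : (0 : ℝ) ≤ n - 1 := by
    have : (2 : ℝ) ≤ n := by exact_mod_cast hn
    linarith
  have hderiv : ∀ r ∈ Ioi (0 : ℝ), HasDerivAt x
      (-(x r ^ 2 + (n - 1) * (cosh r / sinh r) * x r - (n - 1) / sinh r ^ 2)) r := fun r hr => by
    simpa only [hxy] using hasDerivAt_deriv_div_of_ode (b := (n - 1) * (cosh r / sinh r))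
      (c := (n - 1) / sinh r ^ 2) (hpos r hr).ne' (hy1 r hr) (hy2 r hr)
      (by rw [← hode r hr]; ring)
  have hriccati : ∀ r ∈ Ioi (0 : ℝ),
      x r ^ 2 + (n - 1) * (cosh r / sinh r) * x r - (n - 1) / sinh r ^ 2 ≤ 0 := fun r hr =>
    sq_add_mul_sub_nonpos_of_riccati (b := fun t => (n - 1) * (cosh t / sinh t))
      (c := fun t => (n - 1) / sinh t ^ 2)
      (fun t ht => hxy ▸ div_neg_of_neg_of_pos (hy' t (hr.trans_le ht)) (hpos t (hr.trans_le ht)))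
      (fun t ht => hderiv t (hr.trans_le ht))
      ((antitoneOn_mul_cosh_div_sinh hk).mono (Ici_subset_Ioi.2 hr))
      ((antitoneOn_div_sinh_sq hk).mono (Ici_subset_Ioi.2 hr))
      (mul_nonneg hk (div_nonneg (cosh_pos r).le (sinh_pos_iff.2 hr).le))
      (div_nonneg hk (sq_nonneg _))
  have hmono : MonotoneOn x (Ioi 0) :=
    monotoneOn_of_hasDerivWithinAt_nonneg (convex_Ioi 0)
      (fun r hr => (hderiv r hr).continuousAt.continuousWithinAt)
      (fun r hr => (hderiv r (interior_subset hr)).hasDerivWithinAt)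
      (fun r hr => neg_nonneg.2 (hriccati r (interior_subset hr)))
  refine ⟨hmono, hmono.tendsto_nhdsGT_atBot ?_⟩
  rintro ⟨M, hM⟩
  exact not_tendsto_atTop_nhdsGT_of_mul_le_deriv (fun r hr => (hy1 r hr).hasDerivAt)
    (fun r hr => (le_div_iff₀ (hpos r hr)).1 (hx r ▸ hM ⟨r, hr, rfl⟩)) hlim0

theorem stmt5 (n : ℕ) (hn : 2 ≤ n) (y : ℝ → ℝ)
    (hpos : ∀ r ∈ Ioi (0 : ℝ), 0 < y r)
    (hy1 : ∀ r ∈ Ioi (0 : ℝ), DifferentiableAt ℝ y r)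
    (hy2 : ∀ r ∈ Ioi (0 : ℝ), DifferentiableAt ℝ (deriv y) r)
    (hode : ∀ r ∈ Ioi (0 : ℝ),
      deriv (deriv y) r + (n - 1 : ℝ) * (Real.cosh r / Real.sinh r) * deriv y r
        - (n - 1 : ℝ) * y r / (Real.sinh r) ^ 2 = 0)
    (hlim0 : Tendsto y (nhdsWithin 0 (Ioi 0)) atTop)
    (hliminf : Tendsto y atTop (nhds 0))
    (hy' : ∀ r ∈ Ioi (0 : ℝ), deriv y r < 0)
    (x : ℝ → ℝ) (hx : ∀ r, x r = deriv y r / y r) :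
    MonotoneOn x (Ioi 0) ∧ Tendsto x (nhdsWithin 0 (Ioi 0)) atBot :=
  stmt5_general n hn y hpos hy1 hy2 hode hlim0 hy' x hx
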